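/- arXiv:0909.2586 — 2 statements merged into one kernel-verified Lean document; each statement's English description precedes it below -/
import Mathlib

section
/- Let 0 < p < ∞ and let w be a random variable on Ω with ℙ(w ≠ 0) > 2/3. Then there exists a constant C₁ = C₁(p,w) > 0, independent of the sequence (x_n), such that for every (x_n)_{n≥1} ∈ ℓ² and ξ = Σ_{n≥1} r_n x_n one has C₁⁻¹ (Σ_{n≥1} x_n²)^{1/2} ≤ ‖w ξ‖_p. -/
/-!
Fix `δ > 0` with `ℙ(|w| ≥ δ) = 2/3 + ε`, `ε > 0`. For the partial sums `S_N = ∑_{n<N} r_n x_n`,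
independence gives `E S_N² = s_N := ∑_{n<N} x_n²` and `E S_N⁴ ≤ 3 s_N²`, so the Paley–Zygmund
inequality applied to `S_N²` yields `ℙ(S_N² > ε s_N) ≥ (1 - ε)²/3`. On the limsup of these events
`ξ² ≥ ε ∑ x_n²`; its probability is at least `(1 - ε)²/3 ≥ 1/3 - 2ε/3`, so it meets `{|w| ≥ δ}` in
probability at least `ε/3`. There `|w ξ| ≥ δ (ε ∑ x_n²)^{1/2}`, whence
`‖w ξ‖_p ≥ δ √ε (ε/3)^{1/p} (∑ x_n²)^{1/2}`.
-/

open MeasureTheory ProbabilityTheory ENNReal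

/-- A Rademacher sequence: independent random variables taking the values `1` and `-1`,
each with probability `1/2`. -/
def IsRademacherSeq {Ω : Type*} [MeasurableSpace Ω] (P : Measure Ω) (r : ℕ → Ω → ℝ) : Prop :=
  (∀ n, Measurable (r n)) ∧
  iIndepFun (m := fun _ => Real.measurableSpace) r P ∧
  (∀ n, P {ω | r n ω = 1} = 1/2 ∧ P {ω | r n ω = -1} = 1/2)

open Filter Topology

section General

variable {Ω : Type*} [MeasurableSpace Ω] {μ : Measure Ω}

lemma exists_pos_lt_measure_le_abs {f : Ω → ℝ} {c : ℝ≥0∞} (h : c < μ {ω | f ω ≠ 0}) :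
    ∃ δ > (0 : ℝ), c < μ {ω | δ ≤ |f ω|} := by
  have hmono : Monotone fun n : ℕ => {ω | 1 / ((n : ℝ) + 1) ≤ |f ω|} := fun _ _ hmn =>
    Set.ofPred_subset_ofPred.mpr fun _ => (Nat.one_div_le_one_div hmn).trans
  have hunion : ⋃ n : ℕ, {ω | 1 / ((n : ℝ) + 1) ≤ |f ω|} = {ω | f ω ≠ 0} := by
    ext ω
    simp only [Set.mem_iUnion, Set.mem_ofPred_eq]
    refine ⟨fun ⟨n, hn⟩ h0 => ?_, fun h0 => ?_⟩
    · rw [h0, abs_zero] at hn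
      exact (Nat.one_div_pos_of_nat).not_ge hn
    · obtain ⟨n, hn⟩ := exists_nat_one_div_lt (abs_pos.mpr h0)
      exact ⟨n, hn.le⟩
  rw [← hunion, hmono.measure_iUnion, lt_iSup_iff] at h
  obtain ⟨n, hn⟩ := h
  exact ⟨1 / ((n : ℝ) + 1), Nat.one_div_pos_of_nat, hn⟩

lemma le_measure_limsup_atTop [IsFiniteMeasure μ] {s : ℕ → Set Ω} (hs : ∀ n, MeasurableSet (s n))
    {c : ℝ≥0∞} (h : ∀ᶠ n in atTop, c ≤ μ (s n)) : c ≤ μ (limsup s atTop) := by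
  have hanti : Antitone fun n => ⋃ i ≥ n, s i := fun m n hmn =>
    Set.biUnion_mono (fun i hi => le_trans hmn hi) fun _ _ => le_rfl
  rw [limsup_eq_iInf_iSup_of_nat]
  simp only [Set.iInf_eq_iInter, Set.iSup_eq_iUnion]
  rw [hanti.measure_iInter
    (fun n => (MeasurableSet.biUnion (Set.to_countable _) fun i _ => hs i).nullMeasurableSet)
    ⟨0, measure_ne_top μ _⟩]
  obtain ⟨N, hN⟩ := eventually_atTop.mp h
  exact le_iInf fun n => (hN (max n N) (le_max_right n N)).trans
    (measure_mono (Set.subset_biUnion_of_mem (u := s) (le_max_left n N)))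

lemma integral_mul_sq_le_sq_mul_sq {f g : Ω → ℝ} (hf : MemLp f 2 μ) (hg : MemLp g 2 μ) :
    (∫ ω, f ω * g ω ∂μ) ^ 2 ≤ (∫ ω, f ω ^ 2 ∂μ) * ∫ ω, g ω ^ 2 ∂μ := by
  have hfg : Integrable (fun ω => f ω * g ω) μ := hf.integrable_mul hg
  have hexp (t : ℝ) : ∫ ω, (t * f ω + g ω) ^ 2 ∂μ =
      (∫ ω, f ω ^ 2 ∂μ) * (t * t) + 2 * (∫ ω, f ω * g ω ∂μ) * t + ∫ ω, g ω ^ 2 ∂μ := by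
    have hsum : Integrable (fun ω => t * t * f ω ^ 2 + 2 * t * (f ω * g ω)) μ :=
      (hf.integrable_sq.const_mul _).add (hfg.const_mul _)
    calc ∫ ω, (t * f ω + g ω) ^ 2 ∂μ
        = ∫ ω, t * t * f ω ^ 2 + 2 * t * (f ω * g ω) + g ω ^ 2 ∂μ := by
          congr with ω; ring
      _ = _ := by
          rw [integral_add hsum hg.integrable_sq,
            integral_add (hf.integrable_sq.const_mul _) (hfg.const_mul _),
            integral_const_mul, integral_const_mul]
          ring
  have hquad (t : ℝ) : 0 ≤ (∫ ω, f ω ^ 2 ∂μ) * (t * t) + 2 * (∫ ω, f ω * g ω ∂μ) * t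
      + ∫ ω, g ω ^ 2 ∂μ := hexp t ▸ integral_nonneg fun ω => sq_nonneg _
  have hdisc := discrim_le_zero hquad
  rw [discrim] at hdisc
  linarith

lemma ofReal_mul_rpow_le_eLpNorm {E : Type*} [NormedAddCommGroup E] {f : Ω → E} {s : Set Ω}
    (hs : MeasurableSet s) {p : ℝ≥0∞} (hp0 : p ≠ 0) (hp : p ≠ ∞) {K : ℝ}
    (hK : ∀ᵐ ω ∂μ, ω ∈ s → K ≤ ‖f ω‖) :
    ENNReal.ofReal K * μ s ^ (1 / p.toReal) ≤ eLpNorm f p μ := by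
  calc ENNReal.ofReal K * μ s ^ (1 / p.toReal)
      ≤ eLpNorm (s.indicator fun _ => max K 0) p μ := by
        rw [eLpNorm_indicator_const hs hp0 hp, Real.enorm_of_nonneg (le_max_right K 0)]
        gcongr
        exact le_max_left K 0
    _ ≤ eLpNorm f p μ := by
        refine eLpNorm_mono_ae ?_
        filter_upwards [hK] with ω hω
        by_cases hωs : ω ∈ s
        · simpa [Set.indicator_of_mem hωs, abs_of_nonneg (le_max_right K 0)]
            using max_le (hω hωs) (norm_nonneg _)
        · simp [Set.indicator_of_notMem hωs]

end General

section PaleyZygmund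

variable {Ω : Type*} [MeasurableSpace Ω] {μ : Measure Ω} [IsProbabilityMeasure μ]

theorem paley_zygmund {Z : Ω → ℝ} (hZm : Measurable Z) (hZ0 : 0 ≤ᵐ[μ] Z) (hZ : MemLp Z 2 μ)
    {θ : ℝ} (hθ0 : 0 ≤ θ) (hθ1 : θ ≤ 1) :
    (1 - θ) ^ 2 * (∫ ω, Z ω ∂μ) ^ 2 ≤
      (∫ ω, Z ω ^ 2 ∂μ) * μ.real {ω | θ * ∫ ω, Z ω ∂μ < Z ω} := by
  set B := {ω | θ * ∫ ω, Z ω ∂μ < Z ω}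
  have hB : MeasurableSet B := measurableSet_lt measurable_const hZm
  have hEZ : 0 ≤ ∫ ω, Z ω ∂μ := integral_nonneg_of_ae hZ0
  have h1B : MemLp (B.indicator 1 : Ω → ℝ) 2 μ :=
    memLp_indicator_const 2 hB 1 (Or.inr (measure_ne_top _ _))
  have hint : Integrable (fun ω => Z ω * B.indicator 1 ω) μ := hZ.integrable_mul h1B
  have hsplit : (1 - θ) * ∫ ω, Z ω ∂μ ≤ ∫ ω, Z ω * B.indicator 1 ω ∂μ := by
    have : ∫ ω, Z ω ∂μ ≤ ∫ ω, θ * ∫ ω, Z ω ∂μ + Z ω * B.indicator 1 ω ∂μ := by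
      refine integral_mono (hZ.integrable one_le_two) ((integrable_const _).add hint) fun ω => ?_
      by_cases hω : ω ∈ B
      · simp [Set.indicator_of_mem hω]; positivity
      · simpa [Set.indicator_of_notMem hω, B] using hω
    rw [integral_add (integrable_const _) hint, integral_const, probReal_univ, one_smul] at this
    linarith
  have hind : ∫ ω, B.indicator (1 : Ω → ℝ) ω ^ 2 ∂μ = μ.real B := by
    have hsq : (fun ω => B.indicator (1 : Ω → ℝ) ω ^ 2) = B.indicator 1 := by
      ext ω
      by_cases hω : ω ∈ B <;> simp [hω]
    rw [hsq, integral_indicator_one hB]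
  calc (1 - θ) ^ 2 * (∫ ω, Z ω ∂μ) ^ 2 = ((1 - θ) * ∫ ω, Z ω ∂μ) ^ 2 := by ring
    _ ≤ (∫ ω, Z ω * B.indicator 1 ω ∂μ) ^ 2 :=
        pow_le_pow_left₀ (mul_nonneg (by linarith) hEZ) hsplit 2
    _ ≤ _ := hind ▸ integral_mul_sq_le_sq_mul_sq hZ h1B

end PaleyZygmund

section Moments

variable {Ω : Type*} [MeasurableSpace Ω] {μ : Measure Ω} [IsFiniteMeasure μ] {n : ℕ}

lemma MeasureTheory.MemLp.integrable_pow_of_le {X : Ω → ℝ} (hX : MemLp X n μ) {k : ℕ} (hk : k ≤ n) :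
    Integrable (fun ω => X ω ^ k) μ := by
  refine (integrable_norm_iff (hX.aestronglyMeasurable.pow k)).mp ?_
  simpa only [Pi.pow_apply, norm_pow] using
    (hX.mono_exponent (by exact_mod_cast hk : (k : ℝ≥0∞) ≤ n)).integrable_norm_pow'

theorem ProbabilityTheory.IndepFun.integral_add_pow {X Y : Ω → ℝ} (hXY : IndepFun X Y μ)
    (hX : MemLp X n μ) (hY : MemLp Y n μ) :
    ∫ ω, (X ω + Y ω) ^ n ∂μ =
      ∑ k ∈ Finset.range (n + 1), (∫ ω, X ω ^ k ∂μ) * (∫ ω, Y ω ^ (n - k) ∂μ) * n.choose k := by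
  have hpow (k : ℕ) : IndepFun (fun ω => X ω ^ k) (fun ω => Y ω ^ (n - k)) μ :=
    hXY.comp (measurable_id.pow_const k) (measurable_id.pow_const (n - k))
  have hint : ∀ k ∈ Finset.range (n + 1),
      Integrable (fun ω => X ω ^ k * Y ω ^ (n - k) * n.choose k) μ := fun k hk =>
    ((hpow k).integrable_mul (hX.integrable_pow_of_le (Finset.mem_range_succ_iff.mp hk))
      (hY.integrable_pow_of_le (Nat.sub_le n k))).mul_const _
  simp_rw [add_pow]
  rw [integral_finsetSum _ hint]
  refine Finset.sum_congr rfl fun k _ => ?_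
  rw [integral_mul_const, (hpow k).integral_fun_mul_eq_mul_integral
    (hX.aestronglyMeasurable.pow k) (hY.aestronglyMeasurable.pow (n - k))]

end Moments

namespace IsRademacherSeq

variable {Ω : Type*} [MeasurableSpace Ω] {P : Measure Ω} {r : ℕ → Ω → ℝ}

lemma indepFun_sum_range (hr : IsRademacherSeq P r) (x : ℕ → ℝ) (N : ℕ) :
    IndepFun (fun ω => ∑ i ∈ Finset.range N, r i ω * x i) (fun ω => r N ω * x N) P := by
  have hind : iIndepFun (fun i ω => r i ω * x i) P :=
    hr.2.1.comp (fun i y => y * x i) fun i => measurable_mul_const (x i)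
  have h := hind.indepFun_sum_range_succ (fun i => (hr.1 i).mul_const (x i)) N
  simpa only [Finset.sum_fn, Function.comp_def] using h

variable [IsProbabilityMeasure P]

lemma ae_eq_one_or_eq_neg_one (hr : IsRademacherSeq P r) (n : ℕ) :
    ∀ᵐ ω ∂P, r n ω = 1 ∨ r n ω = -1 := by
  have hm (a : ℝ) : MeasurableSet {ω | r n ω = a} := hr.1 n (measurableSet_singleton a)
  refine (ae_mem_iff_measure_eq ((hm 1).union (hm (-1))).nullMeasurableSet).mpr ?_
  have hdisj : Disjoint {ω | r n ω = 1} {ω | r n ω = -1} := Set.disjoint_left.mpr fun ω h1 h2 => by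
    simp only [Set.mem_ofPred_eq] at h1 h2
    linarith
  rw [measure_union hdisj (hm (-1)), (hr.2.2 n).1, (hr.2.2 n).2, ENNReal.add_halves, measure_univ]

lemma integral_eq_zero (hr : IsRademacherSeq P r) (n : ℕ) : ∫ ω, r n ω ∂P = 0 := by
  have hm : MeasurableSet {ω | r n ω = 1} := hr.1 n (measurableSet_singleton 1)
  have haff : r n =ᵐ[P] fun ω => 2 * {ω | r n ω = 1}.indicator 1 ω - 1 := by
    filter_upwards [hr.ae_eq_one_or_eq_neg_one n] with ω hω
    rcases hω with h | h <;> norm_num [Set.indicator_apply, h]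
  rw [integral_congr_ae haff, integral_sub ((integrable_indicator_iff hm).mpr
    (integrable_const 1).integrableOn |>.const_mul 2) (integrable_const 1),
    integral_const_mul, integral_indicator_one hm, measureReal_def, (hr.2.2 n).1]
  norm_num

lemma integral_mul_const_pow (hr : IsRademacherSeq P r) (n k : ℕ) (c : ℝ) :
    ∫ ω, (r n ω * c) ^ k ∂P = if Even k then c ^ k else 0 := by
  simp_rw [mul_pow]
  rw [integral_mul_const]
  rcases Nat.even_or_odd k with hk | hk
  · have : (fun ω => r n ω ^ k) =ᵐ[P] fun _ => 1 := by
      filter_upwards [hr.ae_eq_one_or_eq_neg_one n] with ω hω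
      rcases hω with h | h <;> simp [h, hk.neg_one_pow]
    simp [integral_congr_ae this, hk]
  · have : (fun ω => r n ω ^ k) =ᵐ[P] r n := by
      filter_upwards [hr.ae_eq_one_or_eq_neg_one n] with ω hω
      rcases hω with h | h <;> simp [h, hk.neg_one_pow]
    simp [integral_congr_ae this, hr.integral_eq_zero n, Nat.not_even_iff_odd.mpr hk]

lemma memLp (hr : IsRademacherSeq P r) (n : ℕ) (p : ℝ≥0∞) : MemLp (r n) p P := by
  refine (memLp_top_of_bound (hr.1 n).aestronglyMeasurable 1 ?_).mono_exponent le_top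
  filter_upwards [hr.ae_eq_one_or_eq_neg_one n] with ω hω
  rcases hω with h | h <;> simp [h]

lemma memLp_sum (hr : IsRademacherSeq P r) (x : ℕ → ℝ) (N : ℕ) (p : ℝ≥0∞) :
    MemLp (fun ω => ∑ i ∈ Finset.range N, r i ω * x i) p P :=
  memLp_finsetSum _ fun i _ => (hr.memLp i p).mul_const (x i)

lemma integral_sum_sq (hr : IsRademacherSeq P r) (x : ℕ → ℝ) (N : ℕ) :
    ∫ ω, (∑ i ∈ Finset.range N, r i ω * x i) ^ 2 ∂P = ∑ i ∈ Finset.range N, x i ^ 2 := by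
  induction N with
  | zero => simp
  | succ N ih =>
    simp only [Finset.sum_range_succ]
    rw [(hr.indepFun_sum_range x N).integral_add_pow (hr.memLp_sum x N 2)
      ((hr.memLp N 2).mul_const _)]
    simp only [Finset.sum_range_succ, Finset.range_one, Finset.sum_singleton,
      hr.integral_mul_const_pow, ih, mul_ite, mul_zero, ite_mul, zero_mul, Nat.reduceAdd, tsub_zero,
      Nat.add_one_sub_one, tsub_self, even_two, Nat.not_even_one, Even.zero, ↓reduceIte, pow_zero,
      integral_const, probReal_univ, smul_eq_mul, mul_one, one_mul, add_zero,
      Nat.choose_zero_right, Nat.choose_self, Nat.cast_one]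
    ring

lemma integral_sum_pow_four_le (hr : IsRademacherSeq P r) (x : ℕ → ℝ) (N : ℕ) :
    ∫ ω, (∑ i ∈ Finset.range N, r i ω * x i) ^ 4 ∂P ≤ 3 * (∑ i ∈ Finset.range N, x i ^ 2) ^ 2 := by
  induction N with
  | zero => simp
  | succ N ih =>
    simp only [Finset.sum_range_succ]
    rw [(hr.indepFun_sum_range x N).integral_add_pow (hr.memLp_sum x N 4)
      ((hr.memLp N 4).mul_const _)]
    simp only [Finset.sum_range_succ, Finset.range_one, Finset.sum_singleton,
      hr.integral_mul_const_pow, hr.integral_sum_sq, mul_ite, mul_zero, ite_mul, zero_mul,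
      Nat.reduceAdd, Nat.reduceSub, tsub_zero, Nat.add_one_sub_one, tsub_self, Nat.even_iff,
      Nat.reduceMod, Nat.mod_self, Nat.mod_succ, Nat.zero_mod, one_ne_zero, ↓reduceIte, pow_zero,
      integral_const, probReal_univ, smul_eq_mul, mul_one, one_mul, add_zero, Nat.choose,
      Nat.cast_one, Nat.cast_ofNat]
    nlinarith [sq_nonneg (x N)]

theorem paley_zygmund_sum (hr : IsRademacherSeq P r) (x : ℕ → ℝ) {N : ℕ}
    (hN : 0 < ∑ i ∈ Finset.range N, x i ^ 2) {θ : ℝ} (hθ0 : 0 ≤ θ) (hθ1 : θ ≤ 1) :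
    (1 - θ) ^ 2 / 3 ≤ P.real {ω | θ * ∑ i ∈ Finset.range N, x i ^ 2 <
      (∑ i ∈ Finset.range N, r i ω * x i) ^ 2} := by
  have h2 := hr.integral_sum_sq x N
  have h4 := hr.integral_sum_pow_four_le x N
  have hS := hr.memLp_sum x N 4
  set S := fun ω => ∑ i ∈ Finset.range N, r i ω * x i
  set s := ∑ i ∈ Finset.range N, x i ^ 2
  have hSm : Measurable S := Finset.measurable_sum _ fun i _ => (hr.1 i).mul_const (x i)
  have hS2 : MemLp (fun ω => S ω ^ 2) 2 P := by
    refine (memLp_two_iff_integrable_sq (hSm.pow_const 2).aestronglyMeasurable).mpr ?_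
    simpa only [← pow_mul] using hS.integrable_pow_of_le le_rfl
  have hpz := paley_zygmund (hSm.pow_const 2) (ae_of_all _ fun ω => sq_nonneg _) hS2 hθ0 hθ1
  rw [h2] at hpz
  have key : (1 - θ) ^ 2 * s ^ 2 ≤ P.real {ω | θ * s < S ω ^ 2} * 3 * s ^ 2 :=
    calc (1 - θ) ^ 2 * s ^ 2 ≤ (∫ ω, (S ω ^ 2) ^ 2 ∂P) * P.real {ω | θ * s < S ω ^ 2} := hpz
      _ ≤ 3 * s ^ 2 * P.real {ω | θ * s < S ω ^ 2} := by
        gcongr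
        simpa only [← pow_mul] using h4
      _ = _ := by ring
  rw [div_le_iff₀ three_pos]
  exact le_of_mul_le_mul_right key (pow_pos hN 2)

theorem exists_measurableSet_mul_tsum_le_sq (hr : IsRademacherSeq P r) {x : ℕ → ℝ} {ξ : Ω → ℝ}
    (hx : Summable fun n => x n ^ 2) (hx0 : 0 < ∑' n, x n ^ 2)
    (hξ : ∀ᵐ ω ∂P, HasSum (fun n => r n ω * x n) (ξ ω)) {θ : ℝ} (hθ0 : 0 ≤ θ) (hθ1 : θ ≤ 1) :
    ∃ D, MeasurableSet D ∧ (1 - θ) ^ 2 / 3 ≤ P.real D ∧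
      ∀ᵐ ω ∂P, ω ∈ D → θ * ∑' n, x n ^ 2 ≤ ξ ω ^ 2 := by
  set B : ℕ → Set Ω := fun N => {ω | θ * ∑ i ∈ Finset.range N, x i ^ 2 <
    (∑ i ∈ Finset.range N, r i ω * x i) ^ 2}
  have hB (N : ℕ) : MeasurableSet (B N) := measurableSet_lt measurable_const
    ((Finset.measurable_sum _ fun i _ => (hr.1 i).mul_const (x i)).pow_const 2)
  have hs : Tendsto (fun N => ∑ i ∈ Finset.range N, x i ^ 2) atTop (𝓝 (∑' n, x n ^ 2)) :=
    hx.hasSum.tendsto_sum_nat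
  refine ⟨limsup B atTop, MeasurableSet.measurableSet_limsup hB, ?_, ?_⟩
  · refine (ENNReal.ofReal_le_iff_le_toReal (measure_ne_top P _)).mp (le_measure_limsup_atTop hB ?_)
    filter_upwards [hs.eventually (lt_mem_nhds hx0)] with N hN
    exact ENNReal.ofReal_le_of_le_toReal (hr.paley_zygmund_sum x hN hθ0 hθ1)
  · filter_upwards [hξ] with ω hω hmem
    exact le_of_tendsto_of_tendsto_of_frequently (hs.const_mul θ) (hω.tendsto_sum_nat.pow 2)
      ((mem_limsup_iff_frequently_mem.mp hmem).mono fun N hN => hN.le)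

end IsRademacherSeq

/-- Lower weighted Khintchine inequality: if `ℙ(w ≠ 0) > 2/3` then there is `C₁ > 0`,
independent of `(x_n)`, with `C₁⁻¹ (∑ x_n²)^{1/2} ≤ ‖w ξ‖_p` for all Rademacher sums
`ξ = ∑ r_n x_n`. -/
theorem weighted_khintchine_lower
    {Ω : Type*} [MeasurableSpace Ω] (P : Measure Ω) [IsProbabilityMeasure P]
    (r : ℕ → Ω → ℝ) (hr : IsRademacherSeq P r)
    (p : ℝ) (hp : 0 < p)
    (w : Ω → ℝ) (hwmeas : Measurable w)
    (hw0 : P {ω | w ω ≠ 0} > 2/3) :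
    ∃ C₁ > (0:ℝ), ∀ (x : ℕ → ℝ) (ξ : Ω → ℝ),
      Summable (fun n => x n ^ 2) →
      (∀ᵐ ω ∂P, HasSum (fun n => r n ω * x n) (ξ ω)) →
      ENNReal.ofReal (C₁⁻¹ * (∑' n, x n ^ 2) ^ (1/2 : ℝ)) ≤
        eLpNorm (fun ω => w ω * ξ ω) (ENNReal.ofReal p) P := by
  obtain ⟨δ, hδ, hA⟩ := exists_pos_lt_measure_le_abs hw0
  set A := {ω | δ ≤ |w ω|}
  have hAm : MeasurableSet A := measurableSet_le measurable_const hwmeas.abs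
  set ε := P.real A - 2 / 3 with hε_def
  have hε : 0 < ε := sub_pos.mpr <| by
    simpa [measureReal_def] using (ENNReal.toReal_lt_toReal (by finiteness) (by finiteness)).mpr hA
  refine ⟨(δ * √ε * (ε / 3) ^ (1 / p))⁻¹, by positivity, fun x ξ hx hξ => ?_⟩
  rw [inv_inv]
  rcases (tsum_nonneg fun n => sq_nonneg (x n) : 0 ≤ ∑' n, x n ^ 2).eq_or_lt with hσ | hσ
  · simp [← hσ]
  obtain ⟨D, hDm, hD, hξD⟩ := hr.exists_measurableSet_mul_tsum_le_sq hx hσ hξ hε.le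
    (by linarith [measureReal_le_one (μ := P) (s := A)])
  have hF : ε / 3 ≤ P.real (A ∩ D) := by
    nlinarith [measureReal_union_add_inter (μ := P) (s := A) hDm,
      measureReal_le_one (μ := P) (s := A ∪ D)]
  have hbound : ∀ᵐ ω ∂P, ω ∈ A ∩ D → δ * √(ε * ∑' n, x n ^ 2) ≤ ‖w ω * ξ ω‖ := by
    filter_upwards [hξD] with ω hω ⟨hωA, hωD⟩
    rw [norm_mul, Real.norm_eq_abs, Real.norm_eq_abs, ← Real.sqrt_sq_eq_abs (ξ ω)]
    exact mul_le_mul hωA (Real.sqrt_le_sqrt (hω hωD)) (Real.sqrt_nonneg _) (abs_nonneg _)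
  calc ENNReal.ofReal (δ * √ε * (ε / 3) ^ (1 / p) * (∑' n, x n ^ 2) ^ (1 / 2 : ℝ))
      = ENNReal.ofReal (δ * √(ε * ∑' n, x n ^ 2)) * ENNReal.ofReal (ε / 3) ^ (1 / p) := by
        rw [ENNReal.ofReal_rpow_of_nonneg (by positivity) (by positivity),
          ← ENNReal.ofReal_mul (by positivity), Real.sqrt_mul hε.le, ← Real.sqrt_eq_rpow]
        ring_nf
    _ ≤ ENNReal.ofReal (δ * √(ε * ∑' n, x n ^ 2)) * P (A ∩ D) ^ (1 / p) := by
        gcongr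
        exact ENNReal.ofReal_le_of_le_toReal hF
    _ ≤ eLpNorm (fun ω => w ω * ξ ω) (ENNReal.ofReal p) P := by
        have := ofReal_mul_rpow_le_eLpNorm (hAm.inter hDm) (by simpa using hp) ofReal_ne_top hbound
        rwa [ENNReal.toReal_ofReal hp.le] at this
end

section
/- Let B_q = √2 (Γ((q+1)/2)/√π)^{1/q} for q > 2. Then B_q^{−2q/(q−2)} → 2 e^{−2+γ} as q ↓ 2, where γ is Euler's constant. -/
/-!
Write `B_q ^ (-(2q)/(q-2)) = exp (-2 · (q log B_q)/(q - 2))`. Since `Γ(3/2) = √π/2`, the function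
`f q = q log B_q = q log 2 / 2 + log Γ((q+1)/2) - log √π` vanishes at `q = 2`, so the exponent is
`-2` times a difference quotient of `f` at `2` and tends to `-2 f'(2) = -log 2 - ψ(3/2)`. The value
`ψ(3/2) = 2 - γ - 2 log 2` of the digamma function comes from `Γ'(1/2) = -√π (γ + 2 log 2)` and
the functional equation `Γ(s+1) = s Γ(s)`.
-/

open Filter Real Topology

local notation "γ" => eulerMascheroniConstant

namespace Real

lemma hasDerivAt_Gamma_add_one {s g : ℝ} (hs : s ≠ 0) (h : HasDerivAt Gamma g s) :
    HasDerivAt Gamma (Gamma s + s * g) (s + 1) := by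
  have hshift : HasDerivAt (fun x ↦ Gamma (x + 1)) (Gamma s + s * g) s := by
    refine (((hasDerivAt_id s).mul h).congr_of_eventuallyEq ?_).congr_deriv (by simp)
    filter_upwards [eventually_ne_nhds hs] with x hx using Gamma_add_one hx
  have hback := HasDerivAt.comp_sub_const (s + 1) 1 (by rwa [add_sub_cancel_right])
  beta_reduce at hback
  simpa only [sub_add_cancel] using hback

lemma Gamma_three_halves : Gamma (3 / 2) = √π / 2 := by
  rw [show (3 : ℝ) / 2 = 1 / 2 + 1 by norm_num, Gamma_add_one (by norm_num), Gamma_one_half_eq]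
  ring

lemma hasDerivAt_Gamma_three_halves : HasDerivAt Gamma (√π * (1 - γ / 2 - log 2)) (3 / 2) := by
  have h := hasDerivAt_Gamma_add_one (by norm_num) hasDerivAt_Gamma_one_half
  rw [Gamma_one_half_eq, show (1 : ℝ) / 2 + 1 = 3 / 2 by norm_num] at h
  exact h.congr_deriv (by ring)

lemma hasDerivAt_log_Gamma_three_halves :
    HasDerivAt (fun s ↦ log (Gamma s)) (2 - γ - 2 * log 2) (3 / 2) := by
  have hΓ : Gamma (3 / 2) ≠ 0 := by rw [Gamma_three_halves]; positivity
  refine (hasDerivAt_Gamma_three_halves.log hΓ).congr_deriv ?_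
  rw [Gamma_three_halves]
  field_simp

end Real

/-- `q log B_q`, in the notation `B_q = √2 (Γ((q+1)/2)/√π)^{1/q}`. -/
noncomputable def haagerupLogConst (q : ℝ) : ℝ :=
  q * log 2 / 2 + log (Gamma ((q + 1) / 2)) - log √π

lemma haagerupLogConst_two : haagerupLogConst 2 = 0 := by
  rw [haagerupLogConst, show ((2 : ℝ) + 1) / 2 = 3 / 2 by norm_num, Gamma_three_halves,
    log_div (by positivity) two_ne_zero]
  ring

lemma hasDerivAt_haagerupLogConst_two :
    HasDerivAt haagerupLogConst (1 - γ / 2 - log 2 / 2) 2 := by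
  have hlinear : HasDerivAt (fun q : ℝ ↦ (q + 1) / 2) (1 / 2) 2 :=
    ((hasDerivAt_id' 2).add_const 1).div_const 2
  have hlogGamma : HasDerivAt (fun q : ℝ ↦ log (Gamma ((q + 1) / 2)))
      ((2 - γ - 2 * log 2) * (1 / 2)) 2 := by
    refine HasDerivAt.comp (h₂ := fun s ↦ log (Gamma s)) 2 ?_ hlinear
    norm_num [hasDerivAt_log_Gamma_three_halves]
  refine ((((hasDerivAt_id' 2).mul_const (log 2)).div_const 2).add hlogGamma).sub_const _
    |>.congr_deriv ?_
  ring

lemma rpow_haagerup_eq_exp_slope {q : ℝ} (hq : 2 < q) :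
    (√2 * (Gamma ((q + 1) / 2) / √π) ^ (1 / q)) ^ (-(2 * q) / (q - 2)) =
      exp (-2 * slope haagerupLogConst 2 q) := by
  have hq0 : 0 < q := by linarith
  have hq2 : q - 2 ≠ 0 := by linarith
  have hΓ : 0 < Gamma ((q + 1) / 2) := Gamma_pos_of_pos (by positivity)
  have hratio : 0 < Gamma ((q + 1) / 2) / √π := by positivity
  rw [rpow_def_of_pos (by positivity), log_mul (by positivity) (by positivity),
    log_rpow hratio, log_sqrt zero_le_two, log_div hΓ.ne' (by positivity), slope_def_field,
    haagerupLogConst_two, haagerupLogConst]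
  congr 1
  field_simp
  ring

/-- With `B_q = √2 (Γ((q+1)/2)/√π)^{1/q}` one has
`B_q^{-2q/(q-2)} → 2 e^{-2+γ}` as `q ↓ 2`, where `γ` is the Euler–Mascheroni constant. -/
theorem haagerup_const_limit :
    Tendsto
      (fun q : ℝ =>
        (Real.sqrt 2 * (Real.Gamma ((q + 1) / 2) / Real.sqrt Real.pi) ^ (1 / q)) ^
          (-(2 * q) / (q - 2)))
      (nhdsWithin 2 (Set.Ioi 2))
      (nhds (2 * Real.exp (-2 + Real.eulerMascheroniConstant))) := by
  have hslope : Tendsto (slope haagerupLogConst 2) (𝓝[>] 2) (𝓝 (1 - γ / 2 - log 2 / 2)) :=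
    (hasDerivAt_iff_tendsto_slope.mp hasDerivAt_haagerupLogConst_two).mono_left
      (nhdsWithin_mono 2 fun _ hq ↦ ne_of_gt hq)
  have hlim := (continuous_exp.tendsto _).comp (hslope.const_mul (-2))
  have hvalue : exp (-2 * (1 - γ / 2 - log 2 / 2)) = 2 * exp (-2 + γ) := by
    rw [show -2 * (1 - γ / 2 - log 2 / 2) = log 2 + (-2 + γ) by ring, exp_add, exp_log two_pos]
  rw [← hvalue]
  refine hlim.congr' ?_
  filter_upwards [self_mem_nhdsWithin] with q hq
  exact (rpow_haagerup_eq_exp_slope hq).symm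
end
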